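/- arXiv:0707.4255 — 2 statements merged into one kernel-verified Lean document; each statement's English description precedes it below -/
import Mathlib

section
/- For every positive integer c there exists a polynomial p such that for all n the following holds: if K is an unsatisfiable 3CNF formula over n variables and there is a set S of at most 3(c−1) variables such that every clause of K contains some variable from S, then K has a resolution refutation of size at most p(n). -/
/-!
Branch on the variables of the hitting set `S`. Restricting a variable `v ∈ S` to `b` either
satisfies a clause through `v` or shortens it to width two, and a refutation of the restriction
turns, after adding the literal `(v, !b)` to each of its clauses, into a derivation of the unit
clause `(v, !b)` from `K`; resolving the two unit clauses gives `∅`. After `|S|` levels the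
leaves are unsatisfiable 2-CNFs, which Davis–Putnam variable elimination refutes in size
`O(n³)`: resolvents of 2-clauses are 2-clauses, so each intermediate formula has `O(n²)`
clauses. The total size is `O(2^|S| n⁴)`, a polynomial for fixed `c`.
-/

open scoped Classical

/-- Propositional variables are natural numbers. -/
abbrev Var := ℕ

/-- A literal: a variable with a polarity (`true` = positive occurrence). -/
abbrev Lit := Var × Bool

/-- A clause: a finite set of literals. -/
abbrev Clause := Finset Lit

/-- A CNF formula: a finite collection of clauses. -/
abbrev CNF := Finset Clause

/-- A truth assignment to all variables. -/
abbrev Assignment := Var → Bool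

/-- A clause is proper if it contains no variable together with its negation. -/
def Clause.Proper (C : Clause) : Prop := ∀ v : Var, ¬((v, true) ∈ C ∧ (v, false) ∈ C)

/-- The set of variables occurring in a clause. -/
def Clause.vars (C : Clause) : Finset Var := C.image Prod.fst

/-- The set of variables occurring in a CNF formula. -/
def CNF.vars (K : CNF) : Finset Var := K.sup Clause.vars

/-- Every clause of the CNF is a proper clause. -/
def CNF.Proper (K : CNF) : Prop := ∀ C ∈ K, Clause.Proper C

/-- Evaluation of a literal under an assignment. -/
def Lit.eval (a : Assignment) (l : Lit) : Bool := if l.2 then a l.1 else !(a l.1)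

/-- An assignment satisfies a clause if it makes some literal of it true. -/
def Clause.Sat (a : Assignment) (C : Clause) : Prop := ∃ l ∈ C, Lit.eval a l = true

/-- An assignment satisfies a CNF if it satisfies every clause. -/
def CNF.Sat (a : Assignment) (K : CNF) : Prop := ∀ C ∈ K, Clause.Sat a C

/-- A CNF formula is unsatisfiable. -/
def CNF.Unsat (K : CNF) : Prop := ¬∃ a : Assignment, CNF.Sat a K

/-- A 3CNF: every clause has exactly 3 literals over 3 distinct variables. -/
def Is3CNF (K : CNF) : Prop := ∀ C ∈ K, C.card = 3 ∧ (Clause.vars C).card = 3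

/-- One admissible step in a resolution derivation from the CNF `K`, given the
list `prev` of earlier clauses: `D` is a clause of `K`, or is obtained by
weakening from an earlier clause, or is the resolvent `C ∨ C'` of two earlier
clauses `C ∨ x` and `C' ∨ ¬x` where the variable `x` occurs in neither `C`
nor `C'`. -/
def ResStep (K : CNF) (prev : List Clause) (D : Clause) : Prop :=
  D ∈ K ∨ (∃ E ∈ prev, E ⊆ D) ∨
    (∃ C₁ ∈ prev, ∃ C₂ ∈ prev, ∃ x : Var,
      (x, true) ∈ C₁ ∧ (x, false) ∈ C₂ ∧
      D = C₁.erase (x, true) ∪ C₂.erase (x, false) ∧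
      (x, true) ∉ D ∧ (x, false) ∉ D)

/-- A resolution derivation of the clause `D` from the CNF `K`: a nonempty
sequence of (proper) clauses, each a clause of `K`, a weakening of an earlier
clause, or a resolvent of two earlier clauses, ending with `D`.  Its size is
the length of the list. -/
def IsResDerivation (K : CNF) (L : List Clause) (D : Clause) : Prop :=
  L ≠ [] ∧ L.getLast? = some D ∧
    ∀ i : Fin L.length, Clause.Proper (L.get i) ∧ ResStep K (L.take i.val) (L.get i)

/-- A resolution refutation of `K`: a derivation of the empty clause from `K`. -/
def IsResRefutation (K : CNF) (L : List Clause) : Prop := IsResDerivation K L ∅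

/-- Extend an assignment of the variables X = {0, …, n-1} to all variables
(by `false` elsewhere). -/
def extendAssign {n : ℕ} (a : Fin n → Bool) : Assignment :=
  fun v => if h : v < n then a ⟨v, h⟩ else false

/-- The set of assignments to the n variables X = {0, …, n-1} satisfying `K`
(for `K` with variables among X this is the set of satisfying assignments of `K`). -/
def satSet (n : ℕ) (K : CNF) : Set (Fin n → Bool) := {a | CNF.Sat (extendAssign a) K}

/-- The CNF `A` (over X = {0, …, n-1} together with extension variables) discards the
assignment `a` to X if no extension of `a` to all remaining variables satisfies `A`. -/
def Discards (n : ℕ) (A : CNF) (a : Fin n → Bool) : Prop :=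
  ¬∃ b : Assignment, (∀ i : Fin n, b i.val = a i) ∧ CNF.Sat b A

/-- The set of assignments to X = {0, …, n-1} discarded by `A`. -/
def discardedSet (n : ℕ) (A : CNF) : Set (Fin n → Bool) := {a | Discards n A a}

namespace Clause

variable {C D : Clause} {v : Var} {b : Bool} {a : Assignment}

theorem mem_vars : v ∈ C.vars ↔ ∃ b, (v, b) ∈ C := by
  simp [Clause.vars]

theorem vars_insert (ℓ : Lit) (C : Clause) : (insert ℓ C).vars = insert ℓ.1 C.vars :=
  Finset.image_insert _ _ _

theorem Proper.mono (hD : D.Proper) (h : C ⊆ D) : C.Proper :=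
  fun u hu => hD u ⟨h hu.1, h hu.2⟩

theorem Proper.insert {ℓ : Lit} (hC : C.Proper) (hℓ : ℓ.1 ∉ C.vars) : (insert ℓ C).Proper := by
  rintro u ⟨ht, hf⟩
  rw [Finset.mem_insert] at ht hf
  rcases ht with rfl | ht <;> rcases hf with hf | hf
  · simp at hf
  · exact hℓ (mem_vars.2 ⟨false, hf⟩)
  · exact hℓ (hf ▸ mem_vars.2 ⟨true, ht⟩)
  · exact hC u ⟨ht, hf⟩

theorem proper_of_card_vars (h : C.vars.card = C.card) : C.Proper := by
  rintro u ⟨ht, hf⟩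
  have hinj : Set.InjOn Prod.fst (C : Set Lit) := Finset.card_image_iff.1 h
  simpa using hinj ht hf rfl

theorem sat_of_not_proper (h : ¬C.Proper) : Sat a C := by
  obtain ⟨u, ht, hf⟩ : ∃ u, (u, true) ∈ C ∧ (u, false) ∈ C := by
    simpa [Clause.Proper] using h
  cases hu : a u
  · exact ⟨_, hf, by simp [Lit.eval, hu]⟩
  · exact ⟨_, ht, by simp [Lit.eval, hu]⟩

theorem sat_union : Sat a (C ∪ D) → Sat a C ∨ Sat a D := by
  rintro ⟨ℓ, hℓ, he⟩
  rcases Finset.mem_union.1 hℓ with h | h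
  exacts [Or.inl ⟨ℓ, h, he⟩, Or.inr ⟨ℓ, h, he⟩]

def eraseVar (v : Var) (C : Clause) : Clause := C.filter (·.1 ≠ v)

theorem mem_eraseVar {ℓ : Lit} : ℓ ∈ C.eraseVar v ↔ ℓ ∈ C ∧ ℓ.1 ≠ v :=
  Finset.mem_filter

theorem eraseVar_subset : C.eraseVar v ⊆ C :=
  Finset.filter_subset _ _

theorem vars_eraseVar : (C.eraseVar v).vars ⊆ C.vars.erase v := by
  intro u hu
  obtain ⟨b, hb⟩ := mem_vars.1 hu
  rw [mem_eraseVar] at hb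
  exact Finset.mem_erase.2 ⟨hb.2, mem_vars.2 ⟨b, hb.1⟩⟩

theorem card_eraseVar_lt (h : v ∈ C.vars) : (C.eraseVar v).card < C.card := by
  obtain ⟨b, hb⟩ := mem_vars.1 h
  exact Finset.card_lt_card (Finset.filter_ssubset.2 ⟨(v, b), hb, by simp⟩)

theorem eraseVar_eq_erase (hC : C.Proper) (h : (v, b) ∈ C) : C.eraseVar v = C.erase (v, b) := by
  ext ⟨u, c⟩
  simp only [mem_eraseVar, Finset.mem_erase, ne_eq, Prod.mk.injEq]
  constructor
  · rintro ⟨hu, huv⟩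
    exact ⟨fun h' => huv h'.1, hu⟩
  · rintro ⟨hne, hu⟩
    refine ⟨hu, fun huv => ?_⟩
    subst huv
    cases b <;> cases c <;> simp_all [Clause.Proper]

theorem subset_insert_eraseVar (h : (v, b) ∉ C) : C ⊆ insert (v, !b) (C.eraseVar v) := by
  rintro ⟨u, c⟩ hu
  by_cases huv : u = v
  · subst huv
    cases b <;> cases c <;> simp_all
  · exact Finset.mem_insert_of_mem (mem_eraseVar.2 ⟨hu, huv⟩)

theorem sat_update_iff :
    Sat (Function.update a v b) C ↔ (v, b) ∈ C ∨ Sat a (C.eraseVar v) := by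
  constructor
  · rintro ⟨⟨u, c⟩, hu, he⟩
    by_cases huv : u = v
    · subst huv
      left
      cases b <;> cases c <;> simp_all [Lit.eval]
    · exact Or.inr ⟨(u, c), mem_eraseVar.2 ⟨hu, huv⟩, by
        simpa [Lit.eval, Function.update_of_ne huv] using he⟩
  · rintro (h | ⟨⟨u, c⟩, hu, he⟩)
    · exact ⟨(v, b), h, by cases b <;> simp [Lit.eval]⟩
    · rw [mem_eraseVar] at hu
      exact ⟨(u, c), hu.1, by simpa [Lit.eval, Function.update_of_ne hu.2] using he⟩

end Clause

namespace CNF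

variable {K : CNF} {C : Clause} {v : Var} {b : Bool}

theorem vars_subset_iff {V : Finset Var} : K.vars ⊆ V ↔ ∀ C ∈ K, C.vars ⊆ V :=
  Finset.sup_le_iff

theorem vars_subset_of_mem (h : C ∈ K) : C.vars ⊆ K.vars :=
  Finset.le_sup h

theorem empty_mem_of_vars_eq_empty (hU : K.Unsat) (hK : K.vars = ∅) : ∅ ∈ K := by
  obtain ⟨C, hC⟩ : K.Nonempty := by
    rw [Finset.nonempty_iff_ne_empty]
    rintro rfl
    exact hU ⟨fun _ => true, by simp [CNF.Sat]⟩
  have hCv : C.vars = ∅ := Finset.subset_empty.1 (hK ▸ vars_subset_of_mem hC)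
  rwa [Finset.image_eq_empty.1 hCv] at hC

def WidthLE (K : CNF) (k : ℕ) : Prop := ∀ C ∈ K, C.card ≤ k

theorem card_lt_of_widthLE {k n : ℕ} (hw : K.WidthLE k) (hn : K.vars.card ≤ n) :
    K.card < (2 * n + 2) ^ (k + 1) := by
  set T : Finset Lit := K.vars ×ˢ Finset.univ
  have hT : T.card ≤ 2 * n := by
    simp only [T, Finset.card_product, Finset.card_univ, Fintype.card_bool]
    omega
  have hK : K ⊆ (Finset.range (k + 1)).biUnion T.powersetCard := by
    intro C hC
    refine Finset.mem_biUnion.2 ⟨C.card, Finset.mem_range.2 (Nat.lt_succ_of_le (hw C hC)), ?_⟩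
    refine Finset.mem_powersetCard.2 ⟨fun ℓ hℓ => ?_, rfl⟩
    exact Finset.mem_product.2
      ⟨vars_subset_of_mem hC (Clause.mem_vars.2 ⟨ℓ.2, hℓ⟩), Finset.mem_univ _⟩
  calc K.card ≤ ∑ j ∈ Finset.range (k + 1), (T.powersetCard j).card :=
        (Finset.card_le_card hK).trans Finset.card_biUnion_le
    _ ≤ ∑ j ∈ Finset.range (k + 1), (2 * n + 2) ^ j := by
        refine Finset.sum_le_sum fun j _ => ?_
        rw [Finset.card_powersetCard]
        exact (Nat.choose_le_pow _ _).trans (Nat.pow_le_pow_left (by omega) _)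
    _ < (2 * n + 2) ^ (k + 1) :=
        Nat.geomSum_lt (by omega) fun j hj => Finset.mem_range.1 hj

def restrict (K : CNF) (v : Var) (b : Bool) : CNF :=
  (K.filter fun C => (v, b) ∉ C).image (Clause.eraseVar v)

theorem mem_restrict {C' : Clause} :
    C' ∈ K.restrict v b ↔ ∃ C ∈ K, (v, b) ∉ C ∧ C.eraseVar v = C' := by
  simp [restrict, and_assoc]

theorem vars_restrict : (K.restrict v b).vars ⊆ K.vars.erase v := by
  refine vars_subset_iff.2 fun C' hC' => ?_
  obtain ⟨C, hC, -, rfl⟩ := mem_restrict.1 hC'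
  exact Clause.vars_eraseVar.trans (Finset.erase_subset_erase _ (vars_subset_of_mem hC))

theorem Proper.restrict (hP : K.Proper) : (K.restrict v b).Proper := by
  intro C' hC'
  obtain ⟨C, hC, -, rfl⟩ := mem_restrict.1 hC'
  exact (hP C hC).mono Clause.eraseVar_subset

theorem WidthLE.restrict {k : ℕ} (hw : K.WidthLE k) : (K.restrict v b).WidthLE k := by
  intro C' hC'
  obtain ⟨C, hC, -, rfl⟩ := mem_restrict.1 hC'
  exact (Finset.card_le_card Clause.eraseVar_subset).trans (hw C hC)

theorem Unsat.restrict (hU : K.Unsat) : (K.restrict v b).Unsat := by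
  rintro ⟨a, ha⟩
  refine hU ⟨Function.update a v b, fun C hC => Clause.sat_update_iff.2 ?_⟩
  by_cases h : (v, b) ∈ C
  · exact Or.inl h
  · exact Or.inr (ha _ (mem_restrict.2 ⟨C, hC, h, rfl⟩))

/-- Davis–Putnam elimination of `v`. -/
noncomputable def elimVar (K : CNF) (v : Var) : CNF :=
  K.filter (fun C => v ∉ C.vars) ∪
    (((K ×ˢ K).filter fun p => (v, true) ∈ p.1 ∧ (v, false) ∈ p.2).image
      (fun p => p.1.eraseVar v ∪ p.2.eraseVar v)).filter Clause.Proper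

theorem mem_elimVar {C : Clause} :
    C ∈ K.elimVar v ↔ (C ∈ K ∧ v ∉ C.vars) ∨
      (C.Proper ∧ ∃ C₁ ∈ K, ∃ C₂ ∈ K, (v, true) ∈ C₁ ∧ (v, false) ∈ C₂ ∧
        C = C₁.eraseVar v ∪ C₂.eraseVar v) := by
  simp only [elimVar, Finset.mem_union, Finset.mem_filter, Finset.mem_image,
    Finset.mem_product, Prod.exists]
  constructor
  · rintro (h | ⟨⟨C₁, C₂, ⟨⟨h₁, h₂⟩, ht, hf⟩, rfl⟩, hp⟩)
    exacts [Or.inl h, Or.inr ⟨hp, C₁, h₁, C₂, h₂, ht, hf, rfl⟩]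
  · rintro (h | ⟨hp, C₁, h₁, C₂, h₂, ht, hf, rfl⟩)
    exacts [Or.inl h, Or.inr ⟨⟨C₁, C₂, ⟨⟨h₁, h₂⟩, ht, hf⟩, rfl⟩, hp⟩]

theorem vars_elimVar : (K.elimVar v).vars ⊆ K.vars.erase v := by
  refine vars_subset_iff.2 fun C hC => ?_
  rcases mem_elimVar.1 hC with ⟨hC, hv⟩ | ⟨-, C₁, h₁, C₂, h₂, -, -, rfl⟩
  · exact Finset.subset_erase.2 ⟨vars_subset_of_mem hC, hv⟩
  · rw [Clause.vars, Finset.image_union]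
    exact Finset.union_subset
      (Clause.vars_eraseVar.trans (Finset.erase_subset_erase _ (vars_subset_of_mem h₁)))
      (Clause.vars_eraseVar.trans (Finset.erase_subset_erase _ (vars_subset_of_mem h₂)))

theorem Proper.elimVar (hP : K.Proper) : (K.elimVar v).Proper := by
  intro C hC
  rcases mem_elimVar.1 hC with ⟨hC, -⟩ | ⟨hp, -⟩
  exacts [hP C hC, hp]

theorem WidthLE.elimVar (hw : K.WidthLE 2) : (K.elimVar v).WidthLE 2 := by
  intro C hC
  rcases mem_elimVar.1 hC with ⟨hC, -⟩ | ⟨-, C₁, h₁, C₂, h₂, ht, hf, rfl⟩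
  · exact hw C hC
  · have hlt₁ := Clause.card_eraseVar_lt (Clause.mem_vars.2 ⟨_, ht⟩)
    have hlt₂ := Clause.card_eraseVar_lt (Clause.mem_vars.2 ⟨_, hf⟩)
    have := hw C₁ h₁
    have := hw C₂ h₂
    exact (Finset.card_union_le _ _).trans (by omega)

theorem Unsat.elimVar (hU : K.Unsat) : (K.elimVar v).Unsat := by
  rintro ⟨a, ha⟩
  -- The clauses of `K` without `v` survive in `K.elimVar v`, so are satisfied by `a`.
  have falsified : ∀ b : Bool, ∃ C ∈ K, (v, !b) ∈ C ∧ ¬Clause.Sat a (C.eraseVar v) := by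
    intro b
    obtain ⟨C, hC, hCf⟩ : ∃ C ∈ K, ¬Clause.Sat (Function.update a v b) C := by
      by_contra! h
      exact hU ⟨_, h⟩
    rw [Clause.sat_update_iff, not_or] at hCf
    refine ⟨C, hC, ?_, hCf.2⟩
    by_contra hnb
    have hv : v ∉ C.vars := fun hv => by
      obtain ⟨c, hc⟩ := Clause.mem_vars.1 hv
      cases b <;> cases c <;> simp_all
    refine hCf.2 ?_
    rw [show C.eraseVar v = C from Finset.filter_true_of_mem fun ℓ hℓ hℓv =>
      hv (hℓv ▸ Clause.mem_vars.2 ⟨ℓ.2, hℓ⟩)]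
    exact ha C (mem_elimVar.2 (Or.inl ⟨hC, hv⟩))
  obtain ⟨C₁, h₁, ht, hn₁⟩ := falsified false
  obtain ⟨C₂, h₂, hf, hn₂⟩ := falsified true
  have hR : Clause.Sat a (C₁.eraseVar v ∪ C₂.eraseVar v) := by
    by_cases hp : (C₁.eraseVar v ∪ C₂.eraseVar v).Proper
    · exact ha _ (mem_elimVar.2 (Or.inr ⟨hp, C₁, h₁, C₂, h₂, ht, hf, rfl⟩))
    · exact Clause.sat_of_not_proper hp
  rcases Clause.sat_union hR with h | h
  exacts [hn₁ h, hn₂ h]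

end CNF

/-- The step condition of `IsResDerivation`, in a form suited to concatenating derivations. -/
def IsResSeq (K : CNF) (L : List Clause) : Prop :=
  ∀ l₁ D l₂, L = l₁ ++ D :: l₂ → D.Proper ∧ ResStep K l₁ D

section ResSeq

variable {K K' : CNF} {A B : List Clause} {D : Clause}

theorem ResStep.mono {p q : List Clause} (hpq : ∀ C ∈ p, C ∈ q) :
    ResStep K p D → ResStep K q D := by
  rintro (h | ⟨E, hE, hED⟩ | ⟨C₁, h₁, C₂, h₂, hres⟩)
  · exact Or.inl h
  · exact Or.inr (Or.inl ⟨E, hpq E hE, hED⟩)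
  · exact Or.inr (Or.inr ⟨C₁, hpq C₁ h₁, C₂, hpq C₂ h₂, hres⟩)

theorem ResStep.of_cnf {p : List Clause} (hK' : ∀ C ∈ K', ResStep K A C)
    (h : ResStep K' p D) : ResStep K (A ++ p) D := by
  rcases h with h | h
  · exact (hK' D h).mono fun C hC => List.mem_append_left _ hC
  · exact ResStep.mono (fun C hC => List.mem_append_right _ hC) (Or.inr h)

theorem ResStep.lift {p : List Clause} {ℓ : Lit} (hK' : ∀ C ∈ K', ResStep K A (insert ℓ C))
    (hp : ∀ C ∈ p, ℓ.1 ∉ C.vars) (h : ResStep K' p D) :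
    ResStep K (A ++ p.map (insert ℓ)) (insert ℓ D) := by
  have hmem : ∀ C ∈ p, insert ℓ C ∈ A ++ p.map (insert ℓ) := fun C hC =>
    List.mem_append_right _ (List.mem_map_of_mem hC)
  rcases h with h | ⟨E, hE, hED⟩ | ⟨C₁, h₁, C₂, h₂, x, ht, hf, rfl, hnt, hnf⟩
  · exact (hK' D h).mono fun C hC => List.mem_append_left _ hC
  · exact Or.inr (Or.inl ⟨_, hmem E hE, Finset.insert_subset_insert ℓ hED⟩)
  · have hx : ℓ.1 ≠ x := fun hx => hp C₁ h₁ (hx ▸ Clause.mem_vars.2 ⟨true, ht⟩)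
    have hne : ∀ c, ℓ ≠ (x, c) := fun c hℓ => hx (by rw [hℓ])
    refine Or.inr (Or.inr ⟨_, hmem C₁ h₁, _, hmem C₂ h₂, x, Finset.mem_insert_of_mem ht,
      Finset.mem_insert_of_mem hf, ?_, ?_, ?_⟩)
    · rw [Finset.erase_insert_of_ne (hne true), Finset.erase_insert_of_ne (hne false),
        Finset.insert_union, Finset.union_insert, Finset.insert_idem]
    · exact fun h => (Finset.mem_insert.1 h).elim (fun h => hne true h.symm) hnt
    · exact fun h => (Finset.mem_insert.1 h).elim (fun h => hne false h.symm) hnf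

theorem isResSeq_toList (hP : K.Proper) : IsResSeq K K.toList := fun l₁ D l₂ h => by
  have hD : D ∈ K := Finset.mem_toList.1 (h ▸ List.mem_append_right _ List.mem_cons_self)
  exact ⟨hP D hD, Or.inl hD⟩

theorem IsResSeq.append (hA : IsResSeq K A)
    (hB : ∀ l₁ D l₂, B = l₁ ++ D :: l₂ → D.Proper ∧ ResStep K (A ++ l₁) D) :
    IsResSeq K (A ++ B) := by
  intro l₁ D l₂ h
  rcases List.append_eq_append_iff.1 h with ⟨m, rfl, hm⟩ | ⟨m, hA', hm⟩
  · exact hB m D l₂ hm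
  · cases m with
    | nil =>
      rw [List.append_nil] at hA'
      subst hA'
      simpa using hB [] D l₂ (by simpa using hm.symm)
    | cons E m =>
      obtain ⟨rfl, rfl⟩ := List.cons_eq_cons.1 hm
      exact hA _ _ _ hA'

theorem IsResSeq.append_of_resStep (hA : IsResSeq K A) (hK' : ∀ C ∈ K', ResStep K A C)
    (hB : IsResSeq K' B) : IsResSeq K (A ++ B) :=
  hA.append fun l₁ D l₂ h => ⟨(hB l₁ D l₂ h).1, (hB l₁ D l₂ h).2.of_cnf hK'⟩

theorem IsResSeq.append_map_insert {ℓ : Lit} (hA : IsResSeq K A)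
    (hK' : ∀ C ∈ K', ResStep K A (insert ℓ C)) (hB : IsResSeq K' B)
    (hv : ∀ C ∈ B, ℓ.1 ∉ C.vars) : IsResSeq K (A ++ B.map (insert ℓ)) := by
  refine hA.append fun l₁ D l₂ h => ?_
  obtain ⟨m₁, rest, rfl, rfl, hrest⟩ := List.map_eq_append_iff.1 h
  obtain ⟨D₀, m₂, rfl, rfl, rfl⟩ := List.map_eq_cons_iff.1 hrest
  have hv' : ∀ C ∈ m₁ ++ D₀ :: m₂, ℓ.1 ∉ C.vars := hv
  obtain ⟨hP, hstep⟩ := hB m₁ D₀ m₂ rfl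
  exact ⟨hP.insert (hv' D₀ (by simp)),
    hstep.lift hK' fun C hC => hv' C (List.mem_append_left _ hC)⟩

theorem isResSeq_nil : IsResSeq K [] := fun l₁ D l₂ h => by simp at h

theorem IsResSeq.append_lift_restrict {v : Var} {b : Bool} (hA : IsResSeq K A)
    (hKA : ∀ C ∈ K, C ∈ A) (hB : IsResSeq (K.restrict v b) B)
    (hV : ∀ C ∈ B, C.vars ⊆ (K.restrict v b).vars) :
    IsResSeq K (A ++ B.map (insert (v, !b))) := by
  refine hA.append_map_insert (fun C hC => ?_) hB fun C hC hv => ?_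
  · obtain ⟨C₀, hC₀, hb, rfl⟩ := CNF.mem_restrict.1 hC
    exact Or.inr (Or.inl ⟨C₀, hKA C₀ hC₀, Clause.subset_insert_eraseVar hb⟩)
  · simpa using CNF.vars_restrict (hV C hC hv)

theorem IsResSeq.append_singleton {L : List Clause} (hL : IsResSeq K L) (hD : D.Proper)
    (h : ResStep K L D) : IsResSeq K (L ++ [D]) :=
  hL.append fun l₁ D' l₂ hD' => by
    obtain ⟨rfl, rfl, rfl⟩ : l₁ = [] ∧ D' = D ∧ l₂ = [] := by
      cases l₁ <;> simp_all [eq_comm]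
    simpa using And.intro hD h

theorem IsResSeq.isResRefutation_append_empty {L : List Clause} (hL : IsResSeq K L)
    (h : ∅ ∈ L) : IsResRefutation K (L ++ [∅]) := by
  have hL' := hL.append_singleton (fun u hu => by simp at hu)
    (Or.inr (Or.inl ⟨∅, h, subset_rfl⟩))
  refine ⟨by simp, List.getLast?_concat, fun i => hL' _ _ (List.drop (i + 1) (L ++ [∅])) ?_⟩
  rw [List.get_eq_getElem, ← List.drop_eq_getElem_cons, List.take_append_drop]

end ResSeq

/-- The variable condition is what allows a refutation of `K.restrict v b` to be lifted to `K`
by inserting the literal `(v, !b)` into each of its clauses. -/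
def RefutableWithin (K : CNF) (m : ℕ) : Prop :=
  ∃ L : List Clause, IsResSeq K L ∧ ∅ ∈ L ∧ (∀ C ∈ L, C.vars ⊆ K.vars) ∧ L.length ≤ m

namespace RefutableWithin

variable {K : CNF} {m m' : ℕ}

theorem mono (h : RefutableWithin K m) (hm : m ≤ m') : RefutableWithin K m' :=
  let ⟨L, hL, hempty, hV, hlen⟩ := h
  ⟨L, hL, hempty, hV, hlen.trans hm⟩

theorem of_vars_eq_empty (hP : K.Proper) (hU : K.Unsat) (hK : K.vars = ∅) :
    RefutableWithin K 1 :=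
  have h := CNF.empty_mem_of_vars_eq_empty hU hK
  ⟨[] ++ [∅], isResSeq_nil.append_singleton (hP _ h) (Or.inl h), by simp,
    by simp [Clause.vars], le_rfl⟩

theorem of_elimVar (hP : K.Proper) {v : Var} (h : RefutableWithin (K.elimVar v) m) :
    RefutableWithin K (K.card + m) := by
  obtain ⟨L, hL, hempty, hV, hlen⟩ := h
  have hstep : ∀ C ∈ K.elimVar v, ResStep K K.toList C := by
    intro C hC
    rcases CNF.mem_elimVar.1 hC with ⟨hC, -⟩ | ⟨-, C₁, h₁, C₂, h₂, ht, hf, rfl⟩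
    · exact Or.inl hC
    · have hv : ∀ c, (v, c) ∉ C₁.eraseVar v ∪ C₂.eraseVar v := by simp [Clause.mem_eraseVar]
      rw [Clause.eraseVar_eq_erase (hP C₁ h₁) ht, Clause.eraseVar_eq_erase (hP C₂ h₂) hf] at hv ⊢
      exact Or.inr (Or.inr ⟨C₁, Finset.mem_toList.2 h₁, C₂, Finset.mem_toList.2 h₂, v, ht, hf,
        rfl, hv true, hv false⟩)
  refine ⟨K.toList ++ L, (isResSeq_toList hP).append_of_resStep hstep hL,
    List.mem_append_right _ hempty, fun C hC => ?_, by simpa using hlen⟩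
  rcases List.mem_append.1 hC with hC | hC
  · exact CNF.vars_subset_of_mem (Finset.mem_toList.1 hC)
  · exact (hV C hC).trans (CNF.vars_elimVar.trans (Finset.erase_subset _ _))

theorem of_restrict (hP : K.Proper) {v : Var} (hv : v ∈ K.vars) {m₀ m₁ : ℕ}
    (h₀ : RefutableWithin (K.restrict v false) m₀)
    (h₁ : RefutableWithin (K.restrict v true) m₁) :
    RefutableWithin K (K.card + m₀ + m₁ + 1) := by
  obtain ⟨L₀, hL₀, hempty₀, hV₀, hlen₀⟩ := h₀
  obtain ⟨L₁, hL₁, hempty₁, hV₁, hlen₁⟩ := h₁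
  have hKA : ∀ C ∈ K, C ∈ K.toList := fun C hC => Finset.mem_toList.2 hC
  have hL := ((isResSeq_toList hP).append_lift_restrict hKA hL₀ hV₀).append_lift_restrict
    (fun C hC => List.mem_append_left _ (hKA C hC)) hL₁ hV₁
  set L := K.toList ++ L₀.map (insert (v, !false)) ++ L₁.map (insert (v, !true))
  have hpos : {(v, true)} ∈ L :=
    List.mem_append_left _ (List.mem_append_right _ (List.mem_map_of_mem hempty₀))
  have hneg : {(v, false)} ∈ L := List.mem_append_right _ (List.mem_map_of_mem hempty₁)
  refine ⟨L ++ [∅], hL.append_singleton (fun u hu => by simp at hu)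
    (Or.inr (Or.inr ⟨_, hpos, _, hneg, v, by simp, by simp, by simp, by simp, by simp⟩)),
    by simp, fun C hC => ?_, by
      simp only [L, List.length_append, List.length_map, Finset.length_toList,
        List.length_singleton]
      omega⟩
  have hins : ∀ b (C : Clause), C.vars ⊆ (K.restrict v b).vars →
      Clause.vars (insert (v, !b) C) ⊆ K.vars :=
    fun b C hC => by
      rw [Clause.vars_insert]
      exact Finset.insert_subset hv (hC.trans (CNF.vars_restrict.trans (Finset.erase_subset _ _)))
  simp only [L, List.mem_append, List.mem_map, List.mem_singleton] at hC
  rcases hC with ((hC | ⟨C₀, hC₀, rfl⟩) | ⟨C₀, hC₀, rfl⟩) | rfl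
  · exact CNF.vars_subset_of_mem (Finset.mem_toList.1 hC)
  · exact hins false C₀ (hV₀ C₀ hC₀)
  · exact hins true C₀ (hV₁ C₀ hC₀)
  · simp [Clause.vars]

end RefutableWithin

open RefutableWithin in
theorem refutableWithin_of_widthLE_two {n k : ℕ} {K : CNF} (hP : K.Proper) (hw : K.WidthLE 2)
    (hn : K.vars.card ≤ n) (hk : K.vars.card ≤ k) (hU : K.Unsat) :
    RefutableWithin K ((k + 1) * (2 * n + 2) ^ 3) := by
  have hB : 1 ≤ (2 * n + 2) ^ 3 := Nat.one_le_pow _ _ (by omega)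
  induction k generalizing K with
  | zero => simpa using of_vars_eq_empty hP hU (Finset.card_eq_zero.1 (by omega)) |>.mono hB
  | succ k ih =>
    obtain hK | ⟨v, hv⟩ := K.vars.eq_empty_or_nonempty
    · exact (of_vars_eq_empty hP hU hK).mono (hB.trans (Nat.le_mul_of_pos_left _ (by omega)))
    have hcard := Finset.card_le_card (CNF.vars_elimVar (K := K) (v := v))
    rw [Finset.card_erase_of_mem hv] at hcard
    have hK := (ih (hP.elimVar (v := v)) hw.elimVar (by omega) (by omega)
      (CNF.Unsat.elimVar hU)).of_elimVar hP
    have hsize : K.card < (2 * n + 2) ^ 3 := CNF.card_lt_of_widthLE hw hn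
    refine hK.mono ?_
    rw [Nat.succ_mul (k + 1)]
    omega

namespace CNF

def WideClausesHitBy (K : CNF) (S : Finset Var) : Prop :=
  ∀ C ∈ K, C.card ≤ 2 ∨ ∃ v ∈ S, v ∈ C.vars

variable {K : CNF} {S : Finset Var} {v : Var}

theorem WideClausesHitBy.widthLE_two (h : K.WideClausesHitBy ∅) : K.WidthLE 2 := fun C hC =>
  (h C hC).resolve_right (by simp)

theorem WideClausesHitBy.of_notMem_vars (h : K.WideClausesHitBy (insert v S)) (hv : v ∉ K.vars) :
    K.WideClausesHitBy S := by
  intro C hC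
  refine (h C hC).imp_right fun ⟨u, hu, huC⟩ => ⟨u, ?_, huC⟩
  rcases Finset.mem_insert.1 hu with rfl | hu
  exacts [absurd (vars_subset_of_mem hC huC) hv, hu]

theorem WideClausesHitBy.restrict {b : Bool} (hw : K.WidthLE 3)
    (h : K.WideClausesHitBy (insert v S)) : (K.restrict v b).WideClausesHitBy S := by
  intro C' hC'
  obtain ⟨C, hC, -, rfl⟩ := mem_restrict.1 hC'
  rcases h C hC with hle | ⟨u, hu, huC⟩
  · exact Or.inl ((Finset.card_le_card Clause.eraseVar_subset).trans hle)
  rcases Finset.mem_insert.1 hu with rfl | hu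
  · exact Or.inl (by have := Clause.card_eraseVar_lt huC; have := hw C hC; omega)
  by_cases huv : u = v
  · exact Or.inl (by have := Clause.card_eraseVar_lt (huv ▸ huC); have := hw C hC; omega)
  obtain ⟨c, hc⟩ := Clause.mem_vars.1 huC
  exact Or.inr ⟨u, hu, Clause.mem_vars.2 ⟨c, Clause.mem_eraseVar.2 ⟨hc, huv⟩⟩⟩

end CNF

open RefutableWithin in
theorem refutableWithin_of_wideClausesHitBy {n : ℕ} {K : CNF} {S : Finset Var} (hP : K.Proper)
    (hw : K.WidthLE 3) (hS : K.WideClausesHitBy S) (hn : K.vars.card ≤ n) (hU : K.Unsat) :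
    RefutableWithin K ((2 ^ (S.card + 1) - 1) * (2 * n + 2) ^ 4) := by
  induction S using Finset.induction_on generalizing K with
  | empty =>
    refine (refutableWithin_of_widthLE_two hP hS.widthLE_two hn hn hU).mono ?_
    calc (n + 1) * (2 * n + 2) ^ 3 ≤ (2 * n + 2) * (2 * n + 2) ^ 3 :=
          Nat.mul_le_mul_right _ (by omega)
      _ = (2 ^ ((∅ : Finset Var).card + 1) - 1) * (2 * n + 2) ^ 4 := by
        rw [Finset.card_empty]; ring
  | insert v S hvS ih =>
    have hpow : 2 ^ (S.card + 1) ≤ 2 ^ ((insert v S).card + 1) :=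
      Nat.pow_le_pow_right (by omega) (by simp [Finset.card_insert_of_notMem hvS])
    by_cases hv : v ∈ K.vars
    case neg =>
      exact (ih hP hw (hS.of_notMem_vars hv) hn hU).mono (Nat.mul_le_mul_right _ (by omega))
    have hn' : ∀ b, (K.restrict v b).vars.card ≤ n := fun b =>
      (Finset.card_le_card (CNF.vars_restrict.trans (Finset.erase_subset _ _))).trans hn
    have h₀ := ih hP.restrict hw.restrict (hS.restrict hw) (hn' false) (CNF.Unsat.restrict hU)
    have h₁ := ih hP.restrict hw.restrict (hS.restrict hw) (hn' true) (CNF.Unsat.restrict hU)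
    refine (of_restrict hP hv h₀ h₁).mono ?_
    have hsize : K.card < (2 * n + 2) ^ 4 := CNF.card_lt_of_widthLE hw hn
    have hsplit : 2 ^ ((insert v S).card + 1) - 1 = 2 * (2 ^ (S.card + 1) - 1) + 1 := by
      rw [Finset.card_insert_of_notMem hvS, pow_succ 2 (S.card + 1)]
      have := Nat.one_le_two_pow (n := S.card + 1)
      omega
    rw [hsplit]
    linarith

theorem refutation_with_small_hitting_set_general (c : ℕ) :
    ∃ p : Polynomial ℕ,
      ∀ (n : ℕ) (K : CNF), Is3CNF K → (CNF.vars K).card ≤ n → CNF.Unsat K →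
        (∃ S : Finset Var, S.card ≤ 3 * (c - 1) ∧ ∀ C ∈ K, ∃ v ∈ S, v ∈ Clause.vars C) →
        ∃ L : List Clause, IsResRefutation K L ∧ L.length ≤ p.eval n := by
  refine ⟨.C (2 ^ (3 * (c - 1) + 1) - 1) * (2 * .X + 2) ^ 4 + 1, ?_⟩
  rintro n K h3 hn hU ⟨S, hS, hhit⟩
  have hP : K.Proper := fun C hC =>
    Clause.proper_of_card_vars ((h3 C hC).2.trans (h3 C hC).1.symm)
  obtain ⟨L, hL, hempty, -, hlen⟩ := refutableWithin_of_wideClausesHitBy hP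
    (fun C hC => (h3 C hC).1.le) (fun C hC => Or.inr (hhit C hC)) hn hU
  refine ⟨L ++ [∅], hL.isResRefutation_append_empty hempty, ?_⟩
  have hpow : 2 ^ (S.card + 1) ≤ 2 ^ (3 * (c - 1) + 1) := Nat.pow_le_pow_right (by omega) (by omega)
  simp only [List.length_append, List.length_singleton, Polynomial.eval_add, Polynomial.eval_mul,
    Polynomial.eval_C, Polynomial.eval_pow, Polynomial.eval_X, Polynomial.eval_ofNat,
    Polynomial.eval_one]
  have := Nat.mul_le_mul_right ((2 * n + 2) ^ 4) (Nat.sub_le_sub_right hpow 1)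
  omega

/-- an unsatisfiable 3CNF with a hitting set of constantly many variables
has polynomial-size resolution refutations. -/
theorem refutation_with_small_hitting_set (c : ℕ) (hc : 0 < c) :
    ∃ p : Polynomial ℕ,
      ∀ (n : ℕ) (K : CNF), Is3CNF K → (CNF.vars K).card ≤ n → CNF.Unsat K →
        (∃ S : Finset Var, S.card ≤ 3 * (c - 1) ∧ ∀ C ∈ K, ∃ v ∈ S, v ∈ Clause.vars C) →
        ∃ L : List Clause, IsResRefutation K L ∧ L.length ≤ p.eval n :=
  refutation_with_small_hitting_set_general c
end

section
/- Let S ⊆ {0,1}^n, let K' be a 3CNF formula over n variables, and let D be a clause over the same n variables. Suppose: (i) every assignment α ∈ S that satisfies K' also satisfies D; (ii) for every clause E of K' there exists an assignment α ∈ {0,1}^n that satisfies K' ∖ {E} and falsifies D; and (iii) 2^{n − |Vars(K') ∪ Vars(D)|} > |{0,1}^n ∖ S|, where Vars(D) is the set of variables occurring in D. Then every variable of the boundary ∂K' occurs in D; in particular, the width of D is at least |∂K'|. -/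
open scoped Classical

/-- The boundary ∂K of a CNF: the set of variables occurring in exactly one clause of `K`. -/
def CNF.boundary (K : CNF) : Finset Var :=
  (CNF.vars K).filter (fun v => (K.filter (fun C => v ∈ Clause.vars C)).card = 1)

/-!
Suppose a boundary variable `v` of `K'` is missing from `D`, and let `E` be the only clause
of `K'` containing `v`. Take an assignment satisfying `K' ∖ {E}` and falsifying `D`; setting `v`
so as to satisfy `E` disturbs no other clause and not `D`, so it now satisfies `K'` and falsifies
`D`. So does every assignment agreeing with it on `Vars(K') ∪ Vars(D)`: a subcube with
`2 ^ (n - |Vars(K') ∪ Vars(D)|)` points, too many to avoid `S`, which contradicts the implication.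
-/

theorem Clause.sat_congr {a b : Assignment} {C : Clause} (h : ∀ w ∈ C.vars, a w = b w) :
    Clause.Sat a C ↔ Clause.Sat b C := by
  have hlit : ∀ l ∈ C, Lit.eval a l = Lit.eval b l := fun l hl => by
    simp only [Lit.eval, h l.1 (Finset.mem_image_of_mem _ hl)]
  unfold Clause.Sat
  exact exists_congr fun l => and_congr_right fun hl => by rw [hlit l hl]

theorem CNF.vars_subset_of_mem_s16 {K : CNF} {C : Clause} (hC : C ∈ K) : C.vars ⊆ K.vars :=
  Finset.le_sup (f := Clause.vars) hC

theorem CNF.sat_congr {a b : Assignment} {K : CNF} (h : ∀ w ∈ K.vars, a w = b w) :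
    CNF.Sat a K ↔ CNF.Sat b K :=
  forall₂_congr fun _ hC => Clause.sat_congr fun w hw => h w (CNF.vars_subset_of_mem_s16 hC hw)

theorem Clause.sat_update_iff_of_notMem {C : Clause} {v : Var} (hv : v ∉ C.vars)
    (a : Assignment) (β : Bool) : Clause.Sat (Function.update a v β) C ↔ Clause.Sat a C :=
  Clause.sat_congr fun _ hw => Function.update_of_ne (ne_of_mem_of_not_mem hw hv) _ _

theorem CNF.mem_boundary_iff {K : CNF} {v : Var} :
    v ∈ K.boundary ↔ ∃ E ∈ K, v ∈ E.vars ∧ ∀ C ∈ K, v ∈ C.vars → C = E := by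
  simp only [CNF.boundary, Finset.mem_filter, Finset.card_eq_one,
    Finset.eq_singleton_iff_unique_mem]
  constructor
  · rintro ⟨-, E, ⟨hE, hvE⟩, hunique⟩
    exact ⟨E, hE, hvE, fun C hC hvC => hunique C ⟨hC, hvC⟩⟩
  · rintro ⟨E, hE, hvE, hunique⟩
    exact ⟨CNF.vars_subset_of_mem_s16 hE hvE, E, ⟨hE, hvE⟩, fun C hC => hunique C hC.1 hC.2⟩

theorem CNF.sat_update_of_mem_boundary {K : CNF} {E : Clause} {a : Assignment} {v : Var}
    (ha : CNF.Sat a (K.erase E)) (hE : E ∈ K) (hv : v ∈ K.boundary) (hvE : v ∈ E.vars) :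
    ∃ β, CNF.Sat (Function.update a v β) K := by
  obtain ⟨E', -, -, hunique⟩ := CNF.mem_boundary_iff.mp hv
  obtain ⟨l, hlE, rfl⟩ := Finset.mem_image.mp hvE
  refine ⟨l.2, fun C hC => ?_⟩
  by_cases hCE : C = E
  · subst hCE
    exact ⟨l, hlE, by cases h : l.2 <;> simp [Lit.eval, h]⟩
  · have hvC : l.1 ∉ C.vars := fun hvC =>
      hCE ((hunique C hC hvC).trans (hunique E hE hvE).symm)
    exact (Clause.sat_update_iff_of_notMem hvC a l.2).mpr
      (ha C (Finset.mem_erase.mpr ⟨hCE, hC⟩))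

theorem card_piFinset_ite_singleton_univ {ι : Type*} [Fintype ι] [DecidableEq ι]
    (s : Finset ι) (a : ι → Bool) :
    (Fintype.piFinset fun i => if i ∈ s then {a i} else Finset.univ).card =
      2 ^ (Fintype.card ι - s.card) := by
  rw [Fintype.card_piFinset, ← Finset.card_compl, ← Finset.prod_const,
    ← Fintype.prod_ite_mem sᶜ fun _ => 2]
  refine Fintype.prod_congr _ _ fun i => ?_
  by_cases hi : i ∈ s <;> simp [hi]

theorem exists_mem_eqOn_of_ncard_compl_lt {ι : Type*} [Fintype ι] [DecidableEq ι]
    {S : Set (ι → Bool)} {s : Finset ι} (hS : Sᶜ.ncard < 2 ^ (Fintype.card ι - s.card))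
    (a : ι → Bool) : ∃ b ∈ S, ∀ i ∈ s, b i = a i := by
  by_contra! hcon
  set cube := Fintype.piFinset fun i => if i ∈ s then {a i} else (Finset.univ : Finset Bool)
  have hcube : cube ⊆ Sᶜ.toFinset := fun b hb => by
    refine Set.mem_toFinset.mpr fun hbS => ?_
    obtain ⟨i, hi, hne⟩ := hcon b hbS
    have := Fintype.mem_piFinset.mp hb i
    simp only [hi, if_true, Finset.mem_singleton] at this
    exact hne this
  have := Finset.card_le_card hcube
  rw [card_piFinset_ite_singleton_univ, ← Set.ncard_eq_toFinset_card'] at this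
  omega

theorem extendAssign_update {n : ℕ} (a : Fin n → Bool) (i : Fin n) (β : Bool) :
    extendAssign (Function.update a i β) = Function.update (extendAssign a) i.val β := by
  funext w
  by_cases hw : w < n
  · by_cases hwi : w = i.val
    · subst hwi; simp [extendAssign]
    · have : (⟨w, hw⟩ : Fin n) ≠ i := fun h => hwi (congrArg Fin.val h)
      simp [extendAssign, hw, hwi, Function.update_of_ne this]
  · have : w ≠ i.val := fun h => hw (h ▸ i.isLt)
    simp [extendAssign, hw, this]

theorem extendAssign_eq_of_eqOn {n : ℕ} {a b : Fin n → Bool} {V : Finset Var}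
    (h : ∀ i : Fin n, i.val ∈ V → b i = a i) {w : Var} (hw : w ∈ V) :
    extendAssign b w = extendAssign a w := by
  unfold extendAssign
  split_ifs with hwn
  · exact h _ hw
  · rfl

theorem exists_mem_sat_and_not_sat_of_ncard_compl_lt {n : ℕ} {S : Set (Fin n → Bool)}
    {K : CNF} {D : Clause} (hS : (Sᶜ).ncard < 2 ^ (n - (K.vars ∪ D.vars).card))
    {a : Fin n → Bool} (haK : CNF.Sat (extendAssign a) K)
    (haD : ¬Clause.Sat (extendAssign a) D) :
    ∃ b ∈ S, CNF.Sat (extendAssign b) K ∧ ¬Clause.Sat (extendAssign b) D := by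
  set V := K.vars ∪ D.vars
  have hcard : (Finset.univ.filter fun i : Fin n => i.val ∈ V).card ≤ V.card :=
    Finset.card_le_card_of_injOn Fin.val (fun i hi => (Finset.mem_filter.mp hi).2)
      Fin.val_injective.injOn
  have hS' : Sᶜ.ncard < 2 ^ (Fintype.card (Fin n) -
      (Finset.univ.filter fun i : Fin n => i.val ∈ V).card) :=
    hS.trans_le (Nat.pow_le_pow_right two_pos (by rw [Fintype.card_fin]; omega))
  obtain ⟨b, hbS, hb⟩ := exists_mem_eqOn_of_ncard_compl_lt hS' a
  have hagree : ∀ {w}, w ∈ V → extendAssign b w = extendAssign a w :=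
    extendAssign_eq_of_eqOn fun i hi => hb i (by simpa using hi)
  refine ⟨b, hbS, (CNF.sat_congr fun _ hw => hagree (Finset.mem_union_left _ hw)).mpr haK,
    fun hbD => haD ((Clause.sat_congr fun _ hw => hagree (Finset.mem_union_right _ hw)).mp hbD)⟩

theorem boundary_vars_occur_in_implied_clause_general (n : ℕ) (S : Set (Fin n → Bool))
    (K' : CNF) (D : Clause) (hKvars : CNF.vars K' ⊆ Finset.range n)
    (himp : ∀ a ∈ S, CNF.Sat (extendAssign a) K' → Clause.Sat (extendAssign a) D)
    (hmin : ∀ E ∈ K', ∃ a : Fin n → Bool,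
      CNF.Sat (extendAssign a) (K'.erase E) ∧ ¬Clause.Sat (extendAssign a) D)
    (hS : (Sᶜ).ncard < 2 ^ (n - (CNF.vars K' ∪ Clause.vars D).card)) :
    CNF.boundary K' ⊆ Clause.vars D ∧ (CNF.boundary K').card ≤ D.card := by
  have hsub : CNF.boundary K' ⊆ Clause.vars D := by
    intro v hv
    by_contra hvD
    obtain ⟨E, hE, hvE, -⟩ := CNF.mem_boundary_iff.mp hv
    have hvn : v < n := Finset.mem_range.mp (hKvars (CNF.vars_subset_of_mem_s16 hE hvE))
    obtain ⟨a, haK, haD⟩ := hmin E hE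
    obtain ⟨β, hK⟩ := CNF.sat_update_of_mem_boundary haK hE hv hvE
    rw [← Fin.val_mk hvn, ← extendAssign_update] at hK
    have hD : ¬Clause.Sat (extendAssign (Function.update a ⟨v, hvn⟩ β)) D := by
      rwa [extendAssign_update, Clause.sat_update_iff_of_notMem hvD]
    obtain ⟨b, hbS, hbK, hbD⟩ := exists_mem_sat_and_not_sat_of_ncard_compl_lt hS hK hD
    exact hbD (himp b hbS hbK)
  exact ⟨hsub, (Finset.card_le_card hsub).trans Finset.card_image_le⟩

/-- if every assignment in S satisfying K' satisfies D, K' is minimal with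
this property, and S misses fewer than 2^{n−|Vars(K')∪Vars(D)|} assignments, then
every boundary variable of K' occurs in D, so the width of D is at least |∂K'|. -/
theorem boundary_vars_occur_in_implied_clause (n : ℕ) (S : Set (Fin n → Bool))
    (K' : CNF) (D : Clause) (h3 : Is3CNF K') (hKvars : CNF.vars K' ⊆ Finset.range n)
    (hDprop : Clause.Proper D) (hDvars : Clause.vars D ⊆ Finset.range n)
    (himp : ∀ a ∈ S, CNF.Sat (extendAssign a) K' → Clause.Sat (extendAssign a) D)
    (hmin : ∀ E ∈ K', ∃ a : Fin n → Bool,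
      CNF.Sat (extendAssign a) (K'.erase E) ∧ ¬Clause.Sat (extendAssign a) D)
    (hS : (Sᶜ).ncard < 2 ^ (n - (CNF.vars K' ∪ Clause.vars D).card)) :
    CNF.boundary K' ⊆ Clause.vars D ∧ (CNF.boundary K').card ≤ D.card :=
  boundary_vars_occur_in_implied_clause_general n S K' D hKvars himp hmin hS
end
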